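/- arXiv:1105.3367 — 2 statements merged into one kernel-verified Lean document; each statement's English description precedes it below -/
import Mathlib

section
/- The oriented area of the parallelogram spanned by the vectors (σ(x,x) − σ(y,y))/2 and σ(x,y) in the normal plane, where σ(x,x) = ν₁b, σ(x,y) = λb + μl, σ(y,y) = ν₂b, equals (ν₁ − ν₂)μ/2 = κ/2. Hence the area of the ellipse of normal curvature equals (π/2)|κ|. -/
/-- Oriented area of the parallelogram spanned by two vectors in the plane,
expressed in coordinates with respect to a positively oriented orthonormal basis. -/
def orientedArea (v w : Fin 2 → ℝ) : ℝ := v 0 * w 1 - v 1 * w 0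

theorem stmt11 (ν₁ ν₂ lam μ κ : ℝ) (hκ : κ = (ν₁ - ν₂) * μ)
    (b l σxx σxy σyy : Fin 2 → ℝ)
    (hb : b 0 ^ 2 + b 1 ^ 2 = 1) (hl : l 0 ^ 2 + l 1 ^ 2 = 1)
    (hbl : b 0 * l 0 + b 1 * l 1 = 0) (horient : orientedArea b l = 1)
    (hσxx : σxx = ν₁ • b) (hσxy : σxy = lam • b + μ • l) (hσyy : σyy = ν₂ • b) :
    orientedArea ((1 / 2 : ℝ) • (σxx - σyy)) σxy = κ / 2 ∧
      Real.pi * |orientedArea ((1 / 2 : ℝ) • (σxx - σyy)) σxy| = Real.pi / 2 * |κ| := by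
  have h : orientedArea ((1 / 2 : ℝ) • (σxx - σyy)) σxy = κ / 2 := by
    subst hσxx hσxy hσyy hκ
    simp only [orientedArea] at horient ⊢
    simp only [Pi.smul_apply, Pi.add_apply, Pi.sub_apply, smul_eq_mul]
    linear_combination (ν₁ - ν₂) * μ / 2 * horient
  refine ⟨h, ?_⟩
  rw [h, abs_div]
  norm_num
  ring
end

section
/- For the meridian surface z(u,v) = f(u)l(v) + g(u)e₄ with ḟ² + ġ² = 1 and f > 0, the invariants satisfy k = −κ_m²(u)κ²(v)/f²(u), κ = 0, and K = κ_m(u)ġ(u)/f(u), where κ_m = ḟg̈ − ġf̈. In particular every meridian surface has flat normal connection. -/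
open scoped RealInnerProductSpace
set_option maxHeartbeats 1000000

/-- The fourth vector of the standard orthonormal basis of ℝ⁴. -/
noncomputable def e₄ : EuclideanSpace ℝ (Fin 4) := EuclideanSpace.single 3 1

theorem stmt15
    (f g κm κ : ℝ → ℝ) (l t n : ℝ → EuclideanSpace ℝ (Fin 4))
    (hf : ContDiff ℝ (⊤ : ℕ∞) f) (hg : ContDiff ℝ (⊤ : ℕ∞) g)
    (hfg : ∀ u, (deriv f u) ^ 2 + (deriv g u) ^ 2 = 1)
    (hκm : ∀ u, κm u = deriv f u * deriv (deriv g) u - deriv g u * deriv (deriv f) u)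
    (hl' : ∀ v, HasDerivAt l (t v) v)
    (ht' : ∀ v, HasDerivAt t (κ v • n v - l v) v)
    (hn' : ∀ v, HasDerivAt n (-(κ v) • t v) v)
    (hll : ∀ v, ⟪l v, l v⟫ = 1) (htt : ∀ v, ⟪t v, t v⟫ = 1) (hnn : ∀ v, ⟪n v, n v⟫ = 1)
    (hlt : ∀ v, ⟪l v, t v⟫ = 0) (hln : ∀ v, ⟪l v, n v⟫ = 0) (htn : ∀ v, ⟪t v, n v⟫ = 0)
    (hle : ∀ v, ⟪l v, e₄⟫ = 0) (hte : ∀ v, ⟪t v, e₄⟫ = 0) (hne : ∀ v, ⟪n v, e₄⟫ = 0)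
    (hfpos : ∀ u, f u > 0)
    (z zu zv zuu zuv zvv : ℝ → ℝ → EuclideanSpace ℝ (Fin 4))
    (hz : ∀ u v, z u v = f u • l v + g u • e₄)
    (hzu : ∀ u v, HasDerivAt (fun u' => z u' v) (zu u v) u)
    (hzv : ∀ u v, HasDerivAt (fun v' => z u v') (zv u v) v)
    (hzuu : ∀ u v, HasDerivAt (fun u' => zu u' v) (zuu u v) u)
    (hzuv : ∀ u v, HasDerivAt (fun v' => zu u v') (zuv u v) v)
    (hzvv : ∀ u v, HasDerivAt (fun v' => zv u v') (zvv u v) v)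
    (u v : ℝ) :
    let E := ⟪zu u v, zu u v⟫
    let F := ⟪zu u v, zv u v⟫
    let G := ⟪zv u v, zv u v⟫
    let W := Real.sqrt (E * G - F ^ 2)
    let n₁ := n v
    let n₂ := -(deriv g u) • l v + (deriv f u) • e₄
    let L := 2 * (⟪zuu u v, n₁⟫ * ⟪zuv u v, n₂⟫ - ⟪zuu u v, n₂⟫ * ⟪zuv u v, n₁⟫) / W
    let M := (⟪zuu u v, n₁⟫ * ⟪zvv u v, n₂⟫ - ⟪zuu u v, n₂⟫ * ⟪zvv u v, n₁⟫) / W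
    let N := 2 * (⟪zuv u v, n₁⟫ * ⟪zvv u v, n₂⟫ - ⟪zuv u v, n₂⟫ * ⟪zvv u v, n₁⟫) / W
    let σ₁₁ := ⟪zuu u v, n₁⟫ • n₁ + ⟪zuu u v, n₂⟫ • n₂
    let σ₁₂ := ⟪zuv u v, n₁⟫ • n₁ + ⟪zuv u v, n₂⟫ • n₂
    let σ₂₂ := ⟪zvv u v, n₁⟫ • n₁ + ⟪zvv u v, n₂⟫ • n₂
    (L * N - M ^ 2) / (E * G - F ^ 2) = -((κm u) ^ 2 * (κ v) ^ 2) / (f u) ^ 2 ∧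
      (E * N + G * L - 2 * F * M) / (2 * (E * G - F ^ 2)) = 0 ∧
      (⟪σ₁₁, σ₂₂⟫ - ⟪σ₁₂, σ₁₂⟫) / (E * G - F ^ 2) = κm u * deriv g u / f u := by
  have hf2 : ContDiff ℝ ((⊤ : ℕ∞) : WithTop ℕ∞) f := hf.of_le (by simp)
  have hg2 : ContDiff ℝ ((⊤ : ℕ∞) : WithTop ℕ∞) g := hg.of_le (by simp)
  have hfd : Differentiable ℝ f := hf2.differentiable (by norm_num)
  have hgd : Differentiable ℝ g := hg2.differentiable (by norm_num)
  have hfd' : Differentiable ℝ (deriv f) :=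
    ((contDiff_infty_iff_deriv.mp hf2).2).differentiable (by norm_num)
  have hgd' : Differentiable ℝ (deriv g) :=
    ((contDiff_infty_iff_deriv.mp hg2).2).differentiable (by norm_num)
  -- compute the partial derivatives
  have hzuEall : ∀ u' v', zu u' v' = deriv f u' • l v' + deriv g u' • e₄ := by
    intro u' v'
    have h1 : HasDerivAt (fun x => f x • l v' + g x • e₄)
        (deriv f u' • l v' + deriv g u' • e₄) u' :=
      (((hfd u').hasDerivAt).smul_const (l v')).add (((hgd u').hasDerivAt).smul_const e₄)
    have h2 := hzu u' v'
    have he : (fun x => z x v') = fun x => f x • l v' + g x • e₄ := funext fun x => hz x v'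
    rw [he] at h2
    exact h2.unique h1
  have hzvEall : ∀ v', zv u v' = f u • t v' := by
    intro v'
    have h1 : HasDerivAt (fun x => f u • l x + g u • e₄) (f u • t v') v' := by
      simpa using ((hl' v').const_smul (f u)).add_const (g u • e₄)
    have h2 := hzv u v'
    have he : (fun x => z u x) = fun x => f u • l x + g u • e₄ := funext fun x => hz u x
    rw [he] at h2
    exact h2.unique h1
  have hzuE : zu u v = deriv f u • l v + deriv g u • e₄ := hzuEall u v
  have hzvE : zv u v = f u • t v := hzvEall v
  have hzuuE : zuu u v = deriv (deriv f) u • l v + deriv (deriv g) u • e₄ := by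
    have h1 : HasDerivAt (fun u' => deriv f u' • l v + deriv g u' • e₄)
        (deriv (deriv f) u • l v + deriv (deriv g) u • e₄) u :=
      (((hfd' u).hasDerivAt).smul_const (l v)).add (((hgd' u).hasDerivAt).smul_const e₄)
    have h2 := hzuu u v
    have he : (fun u' => zu u' v) = fun u' => deriv f u' • l v + deriv g u' • e₄ :=
      funext fun u' => hzuEall u' v
    rw [he] at h2
    exact h2.unique h1
  have hzuvE : zuv u v = deriv f u • t v := by
    have h1 : HasDerivAt (fun v' => deriv f u • l v' + deriv g u • e₄)
        (deriv f u • t v) v := by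
      simpa using ((hl' v).const_smul (deriv f u)).add_const (deriv g u • e₄)
    have h2 := hzuv u v
    have he : (fun v' => zu u v') = fun v' => deriv f u • l v' + deriv g u • e₄ :=
      funext fun v' => hzuEall u v'
    rw [he] at h2
    exact h2.unique h1
  have hzvvE : zvv u v = f u • (κ v • n v - l v) := by
    have h1 : HasDerivAt (fun v' => f u • t v') (f u • (κ v • n v - l v)) v :=
      (ht' v).const_smul (f u)
    have h2 := hzvv u v
    have he : (fun v' => zv u v') = fun v' => f u • t v' := funext fun v' => hzvEall v'
    rw [he] at h2
    exact h2.unique h1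
  -- basic inner products
  have hee : ⟪(e₄ : EuclideanSpace ℝ (Fin 4)), e₄⟫ = 1 := by
    simp [e₄, real_inner_self_eq_norm_sq, EuclideanSpace.norm_single]
  have hel : ⟪(e₄ : EuclideanSpace ℝ (Fin 4)), l v⟫ = 0 := by rw [real_inner_comm]; exact hle v
  have het : ⟪(e₄ : EuclideanSpace ℝ (Fin 4)), t v⟫ = 0 := by rw [real_inner_comm]; exact hte v
  have hen : ⟪(e₄ : EuclideanSpace ℝ (Fin 4)), n v⟫ = 0 := by rw [real_inner_comm]; exact hne v
  have htl : ⟪t v, l v⟫ = 0 := by rw [real_inner_comm]; exact hlt v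
  have hnl : ⟪n v, l v⟫ = 0 := by rw [real_inner_comm]; exact hln v
  have hnt : ⟪n v, t v⟫ = 0 := by rw [real_inner_comm]; exact htn v
  have hfu := hfpos u
  have hfne : f u ≠ 0 := ne_of_gt hfu
  -- first fundamental form
  have hE : ⟪zu u v, zu u v⟫ = 1 := by
    rw [hzuE]
    simp only [inner_add_left, inner_add_right, real_inner_smul_left, real_inner_smul_right,
      hll v, hle v, hel, hee]
    nlinarith [hfg u]
  have hF : ⟪zu u v, zv u v⟫ = 0 := by
    rw [hzuE, hzvE]
    simp only [inner_add_left, real_inner_smul_left, real_inner_smul_right, hlt v, het]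
    ring
  have hG : ⟪zv u v, zv u v⟫ = f u ^ 2 := by
    rw [hzvE]
    simp only [real_inner_smul_left, real_inner_smul_right, htt v]
    ring
  -- second fundamental form coefficients
  have i1 : ⟪zuu u v, n v⟫ = 0 := by
    rw [hzuuE]
    simp only [inner_add_left, real_inner_smul_left, hln v, hen]
    ring
  have i2 : ⟪zuu u v, -(deriv g u) • l v + (deriv f u) • e₄⟫ = κm u := by
    rw [hzuuE]
    simp only [inner_add_left, inner_add_right, real_inner_smul_left, real_inner_smul_right,
      neg_smul, inner_neg_right, hll v, hle v, hel, hee, hκm u]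
    ring
  have i3 : ⟪zuv u v, n v⟫ = 0 := by
    rw [hzuvE]
    simp only [real_inner_smul_left, htn v]
    ring
  have i4 : ⟪zuv u v, -(deriv g u) • l v + (deriv f u) • e₄⟫ = 0 := by
    rw [hzuvE]
    simp only [inner_add_right, real_inner_smul_left, real_inner_smul_right, neg_smul,
      inner_neg_right, htl, hte v]
    ring
  have i5 : ⟪zvv u v, n v⟫ = f u * κ v := by
    rw [hzvvE]
    simp only [real_inner_smul_left, inner_sub_left, real_inner_smul_left, hnn v, hln v]
    ring
  have i6 : ⟪zvv u v, -(deriv g u) • l v + (deriv f u) • e₄⟫ = f u * deriv g u := by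
    rw [hzvvE]
    simp only [inner_add_right, real_inner_smul_left, real_inner_smul_right, neg_smul,
      inner_neg_right, inner_sub_left, hnl, hll v, hne v, hle v]
    ring
  -- normal frame inner products
  have hn11 : ⟪n v, n v⟫ = 1 := hnn v
  have hn12 : ⟪n v, -(deriv g u) • l v + (deriv f u) • e₄⟫ = 0 := by
    simp only [inner_add_right, real_inner_smul_right, neg_smul, inner_neg_right, hnl, hne v]
    ring
  have hn22 : ⟪(-(deriv g u) • l v + (deriv f u) • e₄ : EuclideanSpace ℝ (Fin 4)),
      -(deriv g u) • l v + (deriv f u) • e₄⟫ = 1 := by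
    simp only [inner_add_left, inner_add_right, real_inner_smul_left, real_inner_smul_right,
      neg_smul, inner_neg_left, inner_neg_right, hll v, hle v, hel, hee]
    nlinarith [hfg u]
  intro E F G W n₁ n₂ L M N σ₁₁ σ₁₂ σ₂₂
  have hEGF : E * G - F ^ 2 = f u ^ 2 := by
    show ⟪zu u v, zu u v⟫ * ⟪zv u v, zv u v⟫ - ⟪zu u v, zv u v⟫ ^ 2 = f u ^ 2
    rw [hE, hF, hG]; ring
  have hW : W = f u := by
    show Real.sqrt (E * G - F ^ 2) = f u
    rw [hEGF]
    exact Real.sqrt_sq hfu.le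
  have hL : L = 0 := by
    show 2 * (⟪zuu u v, n₁⟫ * ⟪zuv u v, n₂⟫ - ⟪zuu u v, n₂⟫ * ⟪zuv u v, n₁⟫) / W = 0
    show 2 * (⟪zuu u v, n v⟫ * ⟪zuv u v, -(deriv g u) • l v + (deriv f u) • e₄⟫ -
      ⟪zuu u v, -(deriv g u) • l v + (deriv f u) • e₄⟫ * ⟪zuv u v, n v⟫) / W = 0
    rw [i1, i2, i3, i4]; ring
  have hN : N = 0 := by
    show 2 * (⟪zuv u v, n v⟫ * ⟪zvv u v, -(deriv g u) • l v + (deriv f u) • e₄⟫ -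
      ⟪zuv u v, -(deriv g u) • l v + (deriv f u) • e₄⟫ * ⟪zvv u v, n v⟫) / W = 0
    rw [i3, i4, i5, i6]; ring
  have hM : M = -(κm u * κ v) := by
    show (⟪zuu u v, n v⟫ * ⟪zvv u v, -(deriv g u) • l v + (deriv f u) • e₄⟫ -
      ⟪zuu u v, -(deriv g u) • l v + (deriv f u) • e₄⟫ * ⟪zvv u v, n v⟫) / W = -(κm u * κ v)
    rw [i1, i2, i5, i6, hW]
    field_simp
    ring
  refine ⟨?_, ?_, ?_⟩
  · rw [hL, hN, hM, hEGF]
    field_simp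
    ring
  · have hFval : F = 0 := hF
    rw [hL, hN, hFval]
    ring
  · have hn21 : ⟪(-(deriv g u) • l v + (deriv f u) • e₄ : EuclideanSpace ℝ (Fin 4)), n v⟫ = 0 := by
      rw [real_inner_comm]; exact hn12
    have hσ : ⟪σ₁₁, σ₂₂⟫ - ⟪σ₁₂, σ₁₂⟫ = κm u * (f u * deriv g u) := by
      show ⟪⟪zuu u v, n v⟫ • n v +
            ⟪zuu u v, -(deriv g u) • l v + (deriv f u) • e₄⟫ •
              (-(deriv g u) • l v + (deriv f u) • e₄),
            ⟪zvv u v, n v⟫ • n v +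
            ⟪zvv u v, -(deriv g u) • l v + (deriv f u) • e₄⟫ •
              (-(deriv g u) • l v + (deriv f u) • e₄)⟫ -
          ⟪⟪zuv u v, n v⟫ • n v +
            ⟪zuv u v, -(deriv g u) • l v + (deriv f u) • e₄⟫ •
              (-(deriv g u) • l v + (deriv f u) • e₄),
            ⟪zuv u v, n v⟫ • n v +
            ⟪zuv u v, -(deriv g u) • l v + (deriv f u) • e₄⟫ •
              (-(deriv g u) • l v + (deriv f u) • e₄)⟫ = κm u * (f u * deriv g u)
      rw [i1, i2, i3, i4, i5, i6]
      simp only [inner_add_left, inner_add_right, real_inner_smul_left, real_inner_smul_right,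
        hn11, hn12, hn21, hn22, neg_smul, inner_neg_left, inner_neg_right,
        hll v, hle v, hel, hee, hnl, hne v, hen, hln v, htn v, htl]
      linear_combination (f u * deriv g u * κm u) * hfg u
    rw [hσ, hEGF]
    field_simp
end
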